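/- arXiv:1409.5316 — 2 statements merged into one kernel-verified Lean document; each statement's English description precedes it below -/
import Mathlib

section
/- Let Λ ∈ ℝ^{m×m} be the non-zero skew-symmetric matrix built from the constants λ_{ij}. If m is an odd integer, or if m is even and Λ has a non-trivial kernel, then there exists a non-zero vector x ∈ ℝ^m with Λx = 0, and the linear one-homogeneous map u(R,θ) = R g(θ) with g(θ) = x cos θ + x sin θ satisfies the conservation law |g|² + |g'|² = c² for a constant c and solves ∫_B Dγ(∇u)·∇φ − Λ u,_τ · (φ/R) dx = 0 for all φ ∈ C_c^∞(B, ℝ^m). -/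
/-!
A kernel vector `x` of `Λ` exists because a skew-symmetric matrix of odd size has
`det Λ = (-1)ᵐ det Λ = -det Λ`. For `u(y) = (y₁ + y₂) x` the gradient, hence `Dγ(∇u)`, is
constant and the tangential derivative is a multiple of `x`, so the `Λ`-term of the equation
vanishes pointwise and what remains is the integral of a constant matrix against `∇φ`, which is
zero because the integral of a derivative of a compactly supported function vanishes.
-/

open MeasureTheory Metric Real Set Filter Matrix

noncomputable section

abbrev E2 : Type := EuclideanSpace ℝ (Fin 2)
abbrev EV (m : ℕ) : Type := EuclideanSpace ℝ (Fin m)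

/-- The gradient of a map `u : ℝ² → ℝᵐ` as an `m × 2` matrix. -/
def mgrad {m : ℕ} (u : E2 → EV m) (x : E2) : Matrix (Fin m) (Fin 2) ℝ :=
  fun i j => fderiv ℝ u x (EuclideanSpace.single j 1) i

/-- The inner product `A · B = tr(Aᵀ B)` of two matrices. -/
def mdot {m n : ℕ} (A B : Matrix (Fin m) (Fin n) ℝ) : ℝ := ∑ i, ∑ j, A i j * B i j

/-- The Frobenius norm of a matrix. -/
def frob {m n : ℕ} (A : Matrix (Fin m) (Fin n) ℝ) : ℝ := Real.sqrt (mdot A A)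

/-- The 2×2 submatrix `F^{(i,j)}` of an `m × 2` matrix, rows `i` and `j`. -/
def sub2 {m : ℕ} (A : Matrix (Fin m) (Fin 2) ℝ) (i j : Fin m) : Matrix (Fin 2) (Fin 2) ℝ :=
  !![A i 0, A i 1; A j 0, A j 1]

/-- Cofactor matrix of a 2×2 matrix. -/
def cof2 (A : Matrix (Fin 2) (Fin 2) ℝ) : Matrix (Fin 2) (Fin 2) ℝ :=
  !![A 1 1, -A 1 0; -A 0 1, A 0 0]

/-- Determinant of a 2×2 matrix. -/
def det2 (A : Matrix (Fin 2) (Fin 2) ℝ) : ℝ := A 0 0 * A 1 1 - A 0 1 * A 1 0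

/-- The radial unit vector `e_R(θ)`. -/
def eRvec (θ : ℝ) : E2 :=
  Real.cos θ • EuclideanSpace.single (0 : Fin 2) (1:ℝ) +
    Real.sin θ • EuclideanSpace.single (1 : Fin 2) (1:ℝ)

/-- The tangential unit vector `e_θ(θ)`. -/
def eThvec (θ : ℝ) : E2 :=
  (-Real.sin θ) • EuclideanSpace.single (0 : Fin 2) (1:ℝ) +
    Real.cos θ • EuclideanSpace.single (1 : Fin 2) (1:ℝ)

/-- The polar angle of a point of the plane. -/
def argx (x : E2) : ℝ := Complex.arg ⟨x 0, x 1⟩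

/-- The point with polar coordinates `(R, θ)`. -/
def ppt (R θ : ℝ) : E2 := R • eRvec θ

/-- The radial derivative `u,_R` (directional derivative along `e_R`). -/
def dRad {m : ℕ} (u : E2 → EV m) (x : E2) : EV m := fderiv ℝ u x (‖x‖⁻¹ • x)

/-- The tangential derivative `u,_τ = (1/R) u,_θ` (directional derivative along `e_θ`). -/
def dTau {m : ℕ} (u : E2 → EV m) (x : E2) : EV m := fderiv ℝ u x (eThvec (argx x))

/-- Test functions: smooth, compactly supported in `Ω`. -/
def IsTest {m : ℕ} (Ω : Set E2) (φ : E2 → EV m) : Prop :=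
  ContDiff ℝ (⊤ : ℕ∞) φ ∧ HasCompactSupport φ ∧ tsupport φ ⊆ Ω

open Classical in
/-- `Dγ(F) = f'(|F|) F / |F|`, the derivative of `γ(F) = f(|F|)` (with `Dγ(0) = 0`). -/
def Dgam (f : ℝ → ℝ) {m : ℕ} (F : Matrix (Fin m) (Fin 2) ℝ) : Matrix (Fin m) (Fin 2) ℝ :=
  if frob F = 0 then 0 else (deriv f (frob F) / frob F) • F

/-- The one-homogeneous map `u(R,θ) = R g(θ)` in Cartesian coordinates. -/
def polarMap {m : ℕ} (g : ℝ → EV m) (x : E2) : EV m := ‖x‖ • g (argx x)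

/-- The scaled k-covering map `ū(R,θ) = a R e_R(kθ)`. -/
def ubar (a : ℝ) (k : ℕ) (x : E2) : E2 := (a * ‖x‖) • eRvec ((k : ℝ) * argx x)

/-- `φ^{(k)}(R,θ) = φ(k^{-1/2} R, kθ)`. -/
def phk (k : ℕ) (φ : E2 → E2) (x : E2) : E2 :=
  φ (ppt ((Real.sqrt k)⁻¹ * ‖x‖) ((k : ℝ) * argx x))

/-- Membership of `W^{1,p}` of the ball of radius `r`, encoded via a.e. differentiability
together with `L^p` bounds on the function and its gradient. -/
def SobBall {m : ℕ} (p r : ℝ) (u : E2 → EV m) : Prop :=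
  (∀ᵐ x ∂(volume.restrict (ball (0:E2) r)), DifferentiableAt ℝ u x) ∧
  IntegrableOn (fun x => ‖u x‖ ^ p) (ball (0:E2) r) volume ∧
  IntegrableOn (fun x => (frob (mgrad u x)) ^ p) (ball (0:E2) r) volume

/-- `u` is a critical point of `G(u) = ∫_{B_r} γ(∇u) + λ ln R det ∇u dx`. -/
def IsCrit (f : ℝ → ℝ) (lam r : ℝ) (u : E2 → E2) : Prop :=
  ∀ φ : E2 → E2, IsTest (ball (0:E2) r) φ →
    (∫ x in ball (0:E2) r,
      (mdot (Dgam f (mgrad u x)) (mgrad φ x)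
        + lam * Real.log ‖x‖ * mdot (cof2 (mgrad u x)) (mgrad φ x))) = 0

/-- Membership of the admissible class `A_p`: `W^{1,p}`, boundary value `ub`, `G(u)` finite. -/
def InAp (f : ℝ → ℝ) (lam r p : ℝ) (ub u : E2 → E2) : Prop :=
  SobBall p r u ∧ (∀ x ∈ sphere (0:E2) r, u x = ub x) ∧
  IntegrableOn (fun x => f (frob (mgrad u x)) + lam * Real.log ‖x‖ * det2 (mgrad u x))
    (ball (0:E2) r) volume

/-- The value `G(u)` of the functional `G`. -/
def Gval (f : ℝ → ℝ) (lam r : ℝ) (u : E2 → E2) : ℝ :=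
  ∫ x in ball (0:E2) r, (f (frob (mgrad u x)) + lam * Real.log ‖x‖ * det2 (mgrad u x))


/-- Reinterpret a plain vector as an element of Euclidean space. -/
def toEV {m : ℕ} (v : Fin m → ℝ) : EV m := WithLp.toLp 2 v

theorem Matrix.det_eq_zero_of_transpose_eq_neg_of_odd {n R : Type*} [Fintype n] [DecidableEq n]
    [CommRing R] [IsAddTorsionFree R] {A : Matrix n n R} (hA : Aᵀ = -A)
    (hn : Odd (Fintype.card n)) : A.det = 0 := by
  have h : A.det = -A.det := by
    conv_lhs => rw [← det_transpose, hA, det_neg, hn.neg_one_pow, neg_one_mul]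
  exact self_eq_neg.mp h

theorem Matrix.exists_mulVec_eq_zero_of_transpose_eq_neg_of_odd {n R : Type*} [Fintype n]
    [DecidableEq n] [CommRing R] [IsDomain R] [IsAddTorsionFree R] {A : Matrix n n R}
    (hA : Aᵀ = -A) (hn : Odd (Fintype.card n)) : ∃ v, v ≠ 0 ∧ A *ᵥ v = 0 :=
  exists_mulVec_eq_zero_iff.mpr (det_eq_zero_of_transpose_eq_neg_of_odd hA hn)

theorem norm_sq_cos_add_sin_smul_add_norm_sq_deriv {F : Type*} [NormedAddCommGroup F]
    [NormedSpace ℝ F] (v : F) (θ : ℝ) :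
    ‖(cos θ + sin θ) • v‖ ^ 2 + ‖deriv (fun s : ℝ => (cos s + sin s) • v) θ‖ ^ 2
      = (√2 * ‖v‖) ^ 2 := by
  have hd : HasDerivAt (fun s : ℝ => (cos s + sin s) • v) ((-sin θ + cos θ) • v) θ :=
    ((hasDerivAt_cos θ).add (hasDerivAt_sin θ)).smul_const v
  rw [hd.deriv, norm_smul, norm_smul, mul_pow, mul_pow, mul_pow, norm_eq_abs, norm_eq_abs,
    sq_abs, sq_abs, sq_sqrt zero_le_two]
  nlinarith [sin_sq_add_cos_sq θ]

section IntegralDerivative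

variable {E F : Type*} [NormedAddCommGroup E] [NormedSpace ℝ E] [MeasurableSpace E]
  [BorelSpace E] {μ : Measure E} [NormedAddCommGroup F] [NormedSpace ℝ F] {φ : E → F}

theorem HasCompactSupport.integrable_fderiv_apply [IsFiniteMeasureOnCompacts μ]
    (hφ : ContDiff ℝ 1 φ) (hc : HasCompactSupport φ) (v : E) :
    Integrable (fun x => fderiv ℝ φ x v) μ :=
  ((hφ.continuous_fderiv one_ne_zero).clm_apply continuous_const).integrable_of_hasCompactSupport
    (hc.fderiv_apply ℝ v)

variable [FiniteDimensional ℝ E] [μ.IsAddHaarMeasure]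

theorem HasCompactSupport.integral_fderiv_apply_eq_zero (hφ : ContDiff ℝ 1 φ)
    (hc : HasCompactSupport φ) (v : E) : ∫ x, fderiv ℝ φ x v ∂μ = 0 := by
  have h := integral_smul_fderiv_eq_neg_fderiv_smul_of_integrable (μ := μ)
    (f := fun _ : E => (1 : ℝ)) (g := φ) (v := v)
    (by simp) (by simpa using hc.integrable_fderiv_apply hφ v)
    (by simpa using hφ.continuous.integrable_of_hasCompactSupport hc)
    (fun _ _ => differentiableAt_const _) (fun x _ => hφ.differentiable one_ne_zero x)
  simpa using h

theorem HasCompactSupport.setIntegral_fderiv_apply_eq_zero (hφ : ContDiff ℝ 1 φ)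
    (hc : HasCompactSupport φ) {s : Set E} (hs : tsupport φ ⊆ s) (v : E) :
    ∫ x in s, fderiv ℝ φ x v ∂μ = 0 := by
  rw [setIntegral_eq_integral_of_forall_compl_eq_zero fun x hx => by
    rw [fderiv_of_notMem_tsupport ℝ fun h => hx (hs h), _root_.zero_apply]]
  exact hc.integral_fderiv_apply_eq_zero hφ v

end IntegralDerivative

namespace IsTest

variable {m : ℕ} {Ω : Set E2} {φ : E2 → EV m}

theorem integrable_mgrad (hφ : IsTest Ω φ) (i : Fin m) (j : Fin 2) :
    Integrable (fun x => mgrad φ x i j) :=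
  (EuclideanSpace.proj (𝕜 := ℝ) i).integrable_comp
    (hφ.2.1.integrable_fderiv_apply (hφ.1.of_le (by simp)) (EuclideanSpace.single j 1))

theorem setIntegral_mgrad_eq_zero (hφ : IsTest Ω φ) (i : Fin m) (j : Fin 2) :
    ∫ x in Ω, mgrad φ x i j = 0 := by
  have hC1 : ContDiff ℝ 1 φ := hφ.1.of_le (by simp)
  have hint : IntegrableOn (fun x => fderiv ℝ φ x (EuclideanSpace.single j 1)) Ω :=
    (hφ.2.1.integrable_fderiv_apply hC1 _).integrableOn
  have h := (EuclideanSpace.proj (𝕜 := ℝ) i).integral_comp_comm hint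
  simpa [mgrad, hφ.2.1.setIntegral_fderiv_apply_eq_zero hC1 hφ.2.2] using h

theorem setIntegral_mdot_mgrad_eq_zero (hφ : IsTest Ω φ) (A : Matrix (Fin m) (Fin 2) ℝ) :
    ∫ x in Ω, mdot A (mgrad φ x) = 0 := by
  have hint : ∀ i j, IntegrableOn (fun x => A i j * mgrad φ x i j) Ω :=
    fun i j => ((hφ.integrable_mgrad i j).const_mul _).integrableOn
  unfold mdot
  rw [integral_finsetSum _ fun i _ => integrable_finsetSum _ fun j _ => hint i j]
  refine Finset.sum_eq_zero fun i _ => ?_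
  rw [integral_finsetSum _ fun j _ => hint i j]
  refine Finset.sum_eq_zero fun j _ => ?_
  rw [integral_const_mul, hφ.setIntegral_mgrad_eq_zero, mul_zero]

end IsTest

section SumCoordSmul

variable {m : ℕ} (v : EV m)

theorem hasFDerivAt_sum_coord_smul (p : E2) :
    HasFDerivAt (fun y : E2 => (y 0 + y 1) • v)
      ((EuclideanSpace.proj 0 + EuclideanSpace.proj 1 : E2 →L[ℝ] ℝ).smulRight v) p :=
  (EuclideanSpace.proj 0 + EuclideanSpace.proj 1 : E2 →L[ℝ] ℝ).hasFDerivAt.smul_const v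

theorem mgrad_sum_coord_smul (p : E2) :
    mgrad (fun y : E2 => (y 0 + y 1) • v) p = of fun i _ => v i := by
  ext i j
  fin_cases j <;> simp [mgrad, (hasFDerivAt_sum_coord_smul v p).fderiv]

theorem dTau_sum_coord_smul (p : E2) :
    dTau (fun y : E2 => (y 0 + y 1) • v) p = (cos (argx p) - sin (argx p)) • v := by
  simp [dTau, (hasFDerivAt_sum_coord_smul v p).fderiv, eThvec, sub_eq_neg_add]

theorem mulVec_dTau_sum_coord_smul {Λ : Matrix (Fin m) (Fin m) ℝ} (hv : Λ *ᵥ v = 0) (p : E2) :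
    Λ *ᵥ dTau (fun y : E2 => (y 0 + y 1) • v) p = 0 := by
  rw [dTau_sum_coord_smul, WithLp.ofLp_smul, mulVec_smul, hv, smul_zero]

end SumCoordSmul

theorem statement_2_general {m : ℕ} (f : ℝ → ℝ)
    (Λ : Matrix (Fin m) (Fin m) ℝ) (hskew : Λᵀ = -Λ)
    (hcase : Odd m ∨ (Even m ∧ ∃ v : Fin m → ℝ, v ≠ 0 ∧ Λ.mulVec v = 0)) :
    ∃ xv : EV m, xv ≠ 0 ∧ Λ.mulVec xv = 0 ∧
      (∃ c : ℝ, ∀ θ : ℝ,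
        ‖(Real.cos θ + Real.sin θ) • xv‖ ^ 2
          + ‖deriv (fun s : ℝ => (Real.cos s + Real.sin s) • xv) θ‖ ^ 2 = c ^ 2) ∧
      (∀ φ : E2 → EV m, IsTest (ball (0:E2) 1) φ →
        (∫ x in ball (0:E2) 1,
          (mdot (Dgam f (mgrad (fun y : E2 => (y 0 + y 1) • xv) x)) (mgrad φ x)
            - ∑ i, (∑ j, Λ i j * dTau (fun y : E2 => (y 0 + y 1) • xv) x j)
                * (φ x i / ‖x‖))) = 0) := by
  obtain ⟨v, hv0, hΛv⟩ : ∃ v : Fin m → ℝ, v ≠ 0 ∧ Λ *ᵥ v = 0 := by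
    rcases hcase with hodd | ⟨-, hker⟩
    · exact exists_mulVec_eq_zero_of_transpose_eq_neg_of_odd hskew (by simpa using hodd)
    · exact hker
  refine ⟨toEV v, by simpa [toEV] using hv0, hΛv,
    ⟨_, norm_sq_cos_add_sin_smul_add_norm_sq_deriv (toEV v)⟩, fun φ hφ => ?_⟩
  have hτ : ∀ x i, ∑ j, Λ i j * dTau (fun y : E2 => (y 0 + y 1) • toEV v) x j = 0 :=
    fun x i => congrFun (mulVec_dTau_sum_coord_smul _ hΛv x) i
  simp only [hτ, mgrad_sum_coord_smul, zero_mul, Finset.sum_const_zero, sub_zero]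
  exact hφ.setIntegral_mdot_mgrad_eq_zero _

/-- Proposition `Hechler` (a)(i): if `Λ ≠ 0` is skew-symmetric and `m` is odd,
or `m` is even and `ker Λ` is non-trivial, then there is a non-zero `x` with `Λx = 0`, and the
linear one-homogeneous map `u = R g(θ)`, `g(θ) = x cos θ + x sin θ`, satisfies the conservation
law and solves the weak Euler–Lagrange equation. -/
theorem statement_2 {m : ℕ} (f : ℝ → ℝ) (hf : DifferentiableOn ℝ f (Ici 0))
    (Λ : Matrix (Fin m) (Fin m) ℝ) (hskew : Λᵀ = -Λ) (hne : Λ ≠ 0)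
    (hcase : Odd m ∨ (Even m ∧ ∃ v : Fin m → ℝ, v ≠ 0 ∧ Λ.mulVec v = 0)) :
    ∃ xv : EV m, xv ≠ 0 ∧ Λ.mulVec xv = 0 ∧
      (∃ c : ℝ, ∀ θ : ℝ,
        ‖(Real.cos θ + Real.sin θ) • xv‖ ^ 2
          + ‖deriv (fun s : ℝ => (Real.cos s + Real.sin s) • xv) θ‖ ^ 2 = c ^ 2) ∧
      (∀ φ : E2 → EV m, IsTest (ball (0:E2) 1) φ →
        (∫ x in ball (0:E2) 1,
          (mdot (Dgam f (mgrad (fun y : E2 => (y 0 + y 1) • xv) x)) (mgrad φ x)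
            - ∑ i, (∑ j, Λ i j * dTau (fun y : E2 => (y 0 + y 1) • xv) x j)
                * (φ x i / ‖x‖))) = 0) :=
  statement_2_general f Λ hskew hcase

end
end

section
/- Let f be C² on (0,∞) with f''(t) > 0 for all t > 0, and let γ(F) = f(|F|) on ℝ^{2×2} be such that Dγ(0) exists and γ(F) ≥ γ(0) = 0 for all F. Then γ is strictly convex, i.e. γ(F') − γ(F) > Dγ(F)·(F'−F) for all F ≠ F', and consequently Dγ is strictly monotone, i.e. (Dγ(F') − Dγ(F))·(F'−F) > 0 for all F ≠ F', and Dγ is continuous. -/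
open MeasureTheory Metric Real Set Filter Matrix

noncomputable section

/-- The space of 2×2 matrices with the Frobenius (Euclidean) norm. -/
abbrev M2E : Type := EuclideanSpace ℝ (Fin 2 × Fin 2)

/-! Since `γ = f ∘ ‖·‖` is even, `Dγ(0) = 0`, so `f` has right derivative `0` at `0`. Together
with `f'' > 0` this makes `f` strictly convex and strictly increasing on `[0, ∞)`; as the
Frobenius norm is strictly convex on spheres, `γ` is strictly convex. Restricting `γ` to the
line through `F` and `F'` gives the strict tangent inequality, and adding it for `(F, F')` and
`(F', F)` gives strict monotonicity of `Dγ`. Away from `0`, `Dγ` is continuous because `γ` is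
`C¹` there; near `0`, `‖Dγ(F)‖ ≤ sup_{(0, ‖F‖)} |f'|`, and convexity squeezes `f'(t)` between
slopes of `f` from `0`, which tend to `0`. -/

open Topology

section NormedSpace

variable {E : Type*} [NormedAddCommGroup E] [NormedSpace ℝ E]

theorem StrictConvexOn.comp_lineMap {φ : E → ℝ} (hφ : StrictConvexOn ℝ univ φ) {x y : E}
    (hxy : x ≠ y) : StrictConvexOn ℝ univ (φ ∘ AffineMap.lineMap (k := ℝ) x y) := by
  refine ⟨convex_univ, fun s _ t _ hst a b ha hb hab => ?_⟩
  have hne : AffineMap.lineMap (k := ℝ) x y s ≠ AffineMap.lineMap x y t :=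
    (AffineMap.lineMap_injective ℝ hxy).ne hst
  simpa only [Function.comp_apply, Convex.combo_affine_apply hab] using
    hφ.2 (mem_univ _) (mem_univ _) hne ha hb hab

theorem StrictConvexOn.fderiv_lt_sub {φ : E → ℝ} (hφ : StrictConvexOn ℝ univ φ) {x y : E}
    (hx : DifferentiableAt ℝ φ x) (hxy : x ≠ y) : fderiv ℝ φ x (y - x) < φ y - φ x := by
  have hline : HasDerivAt (φ ∘ AffineMap.lineMap (k := ℝ) x y) (fderiv ℝ φ x (y - x)) 0 := by
    refine hx.hasFDerivAt.comp_hasDerivAt_of_eq 0 AffineMap.hasDerivAt_lineMap ?_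
    simp
  simpa [slope_def_field] using
    (hφ.comp_lineMap hxy).lt_slope_of_hasDerivAt (mem_univ 0) (mem_univ 1) one_pos hline

theorem StrictConvexOn.fderiv_sub_fderiv_pos {φ : E → ℝ} (hφ : StrictConvexOn ℝ univ φ) {x y : E}
    (hx : DifferentiableAt ℝ φ x) (hy : DifferentiableAt ℝ φ y) (hxy : x ≠ y) :
    0 < fderiv ℝ φ y (y - x) - fderiv ℝ φ x (y - x) := by
  have hxy' := hφ.fderiv_lt_sub hx hxy
  have hyx := hφ.fderiv_lt_sub hy hxy.symm
  rw [← neg_sub, map_neg] at hyx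
  linarith

theorem Function.Even.fderiv_zero {φ : E → ℝ} (hφ : φ.Even) : fderiv ℝ φ 0 = 0 := by
  by_cases hd : DifferentiableAt ℝ φ 0
  · have hd' : HasFDerivAt φ (fderiv ℝ φ 0) (-0) := by simpa using hd.hasFDerivAt
    have hneg := hd'.comp 0 (hasFDerivAt_id (0 : E)).neg
    rw [show φ ∘ Neg.neg = φ from funext hφ] at hneg
    ext v
    have := congr($(hd.hasFDerivAt.unique hneg) v)
    simp only [ContinuousLinearMap.comp_apply, _root_.neg_apply, ContinuousLinearMap.id_apply,
      map_neg, _root_.zero_apply] at this ⊢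
    linarith
  · exact fderiv_zero_of_not_differentiableAt hd

theorem StrictConvexOn.comp_norm [StrictConvexSpace ℝ E] {g : ℝ → ℝ}
    (hg : StrictConvexOn ℝ (Ici 0) g) (hg' : StrictMonoOn g (Ici 0)) :
    StrictConvexOn ℝ univ (fun x : E => g ‖x‖) := by
  refine ⟨convex_univ, fun x _ y _ hxy a b ha hb hab => ?_⟩
  have hnorm : ∀ z : E, ‖z‖ ∈ Ici (0 : ℝ) := norm_nonneg
  rcases eq_or_ne ‖x‖ ‖y‖ with hr | hr
  · calc g ‖a • x + b • y‖ < g ‖x‖ :=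
          hg' (hnorm _) (hnorm x) (norm_combo_lt_of_ne le_rfl hr.ge hxy ha hb hab)
      _ = a • g ‖x‖ + b • g ‖y‖ := by rw [← hr, smul_eq_mul, smul_eq_mul, ← add_mul, hab, one_mul]
  · calc g ‖a • x + b • y‖ ≤ g (a • ‖x‖ + b • ‖y‖) :=
          hg'.monotoneOn (hnorm _) (hg.1 (hnorm x) (hnorm y) ha.le hb.le hab)
            (convexOn_univ_norm.2 (mem_univ x) (mem_univ y) ha.le hb.le hab)
      _ < a • g ‖x‖ + b • g ‖y‖ := hg.2 (hnorm x) (hnorm y) hr ha hb hab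

theorem hasDerivWithinAt_Ici_zero_of_differentiableAt_comp_norm [Nontrivial E] {g : ℝ → ℝ}
    (hg : DifferentiableAt ℝ (fun x : E => g ‖x‖) 0) : HasDerivWithinAt g 0 (Ici 0) 0 := by
  obtain ⟨e, he⟩ := exists_norm_eq E (c := 1) zero_le_one
  have heven : Function.Even fun x : E => g ‖x‖ := fun x => congrArg g (norm_neg x)
  have hgrad : HasFDerivAt (fun x : E => g ‖x‖) (0 : E →L[ℝ] ℝ) 0 :=
    heven.fderiv_zero ▸ hg.hasFDerivAt
  have hline : HasDerivAt (fun t : ℝ => g ‖t • e‖) 0 0 :=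
    (hgrad.comp_hasDerivAt_of_eq 0 ((hasDerivAt_id 0).smul_const e)
      (zero_smul ℝ e).symm).congr_deriv (by simp)
  refine hline.hasDerivWithinAt.congr (fun t ht => ?_) (by simp)
  simp [norm_smul, he, abs_of_nonneg (mem_Ici.1 ht)]

theorem norm_fderiv_comp_norm_le {g : ℝ → ℝ} {c C : ℝ}
    (hg : ∀ t ∈ Ioo 0 c, DifferentiableAt ℝ g t) (hC : ∀ t ∈ Ioo 0 c, ‖deriv g t‖ ≤ C)
    {x : E} (hx : x ≠ 0) (hxc : ‖x‖ < c) : ‖fderiv ℝ (fun y : E => g ‖y‖) x‖ ≤ C := by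
  have hxI : ‖x‖ ∈ Ioo 0 c := ⟨norm_pos_iff.2 hx, hxc⟩
  refine norm_fderiv_le_of_lip' ℝ ((norm_nonneg _).trans (hC _ hxI)) ?_
  filter_upwards [(isOpen_Ioo.preimage continuous_norm).mem_nhds hxI] with y hy
  calc ‖g ‖y‖ - g ‖x‖‖ ≤ C * ‖‖y‖ - ‖x‖‖ :=
        (convex_Ioo 0 c).norm_image_sub_le_of_norm_deriv_le hg hC hxI hy
    _ ≤ C * ‖y - x‖ := by
        gcongr
        · exact (norm_nonneg _).trans (hC _ hxI)
        · exact abs_norm_sub_norm_le y x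

theorem continuousAt_fderiv_comp_norm_zero {g : ℝ → ℝ} (hg : DifferentiableOn ℝ g (Ioi 0))
    (hg' : Tendsto (deriv g) (𝓝[>] 0) (𝓝 0)) :
    ContinuousAt (fderiv ℝ (fun x : E => g ‖x‖)) 0 := by
  have h0 : fderiv ℝ (fun x : E => g ‖x‖) 0 = 0 :=
    Function.Even.fderiv_zero fun x => congrArg g (norm_neg x)
  rw [ContinuousAt, h0, NormedAddGroup.tendsto_nhds_zero]
  intro ε hε
  obtain ⟨c, hc, hsmall⟩ :=
    mem_nhdsGT_iff_exists_Ioo_subset.1 (NormedAddGroup.tendsto_nhds_zero.1 hg' _ (half_pos hε))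
  filter_upwards [ball_mem_nhds (0 : E) hc] with x hx
  rcases eq_or_ne x 0 with rfl | hx0
  · simpa [h0] using hε
  · calc _ ≤ ε / 2 :=
          norm_fderiv_comp_norm_le (fun t ht => hg.differentiableAt (Ioi_mem_nhds ht.1))
            (fun t ht => (hsmall ht).le) hx0 (mem_ball_zero_iff.1 hx)
      _ < ε := half_lt_self hε

end NormedSpace

theorem continuous_fderiv_comp_norm {F : Type*} [NormedAddCommGroup F] [InnerProductSpace ℝ F]
    {g : ℝ → ℝ} (hg : ContDiffOn ℝ 1 g (Ioi 0)) (hg' : Tendsto (deriv g) (𝓝[>] 0) (𝓝 0)) :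
    Continuous (fderiv ℝ (fun x : F => g ‖x‖)) := by
  refine continuous_iff_continuousAt.2 fun x => ?_
  rcases eq_or_ne x 0 with rfl | hx
  · exact continuousAt_fderiv_comp_norm_zero (hg.differentiableOn one_ne_zero) hg'
  · exact ((hg.contDiffAt (Ioi_mem_nhds (norm_pos_iff.2 hx))).comp x
      (contDiffAt_norm ℝ hx)).continuousAt_fderiv one_ne_zero

section Real

variable {g : ℝ → ℝ} {a d : ℝ}

theorem StrictConvexOn.strictMonoOn_Ici_of_hasDerivWithinAt (hg : StrictConvexOn ℝ (Ici a) g)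
    (ha : HasDerivWithinAt g d (Ici a) a) (hd : 0 ≤ d) : StrictMonoOn g (Ici a) := by
  intro x hx y hy hxy
  have hay : a < y := lt_of_le_of_lt hx hxy
  have hslope : slope g a y ≤ slope g x y := by
    rw [slope_comm g a, slope_comm g x]
    exact hg.convexOn.slope_mono hy ⟨self_mem_Ici, hay.ne⟩ ⟨hx, hxy.ne⟩ hx
  rw [← slope_pos_iff_of_le hxy.le]
  linarith [hg.lt_slope_of_hasDerivWithinAt self_mem_Ici hy hay ha]

theorem ConvexOn.tendsto_deriv_nhdsGT (hg : ConvexOn ℝ (Ici a) g)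
    (hdiff : DifferentiableOn ℝ g (Ioi a)) (ha : HasDerivWithinAt g d (Ici a) a) :
    Tendsto (deriv g) (𝓝[>] a) (𝓝 d) := by
  have hslope : Tendsto (slope g a) (𝓝[>] a) (𝓝 d) :=
    (hasDerivWithinAt_iff_tendsto_slope' (lt_irrefl a)).1 (hasDerivWithinAt_Ioi_iff_Ici.2 ha)
  have hdouble : Tendsto (fun x => 2 * x - a) (𝓝[>] a) (𝓝[>] a) := by
    refine tendsto_nhdsWithin_of_tendsto_nhds_of_eventually_within _ ?_ ?_
    · have : Tendsto (fun x => 2 * x - a) (𝓝 a) (𝓝 (2 * a - a)) :=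
        (tendsto_id.const_mul 2).sub_const a
      rw [two_mul, add_sub_cancel_right] at this
      exact this.mono_left nhdsWithin_le_nhds
    · filter_upwards [self_mem_nhdsWithin] with x (hx : a < x)
      show a < 2 * x - a
      linarith
  have hupper : Tendsto (fun x => 2 * slope g a (2 * x - a) - slope g a x) (𝓝[>] a) (𝓝 d) := by
    simpa [two_mul] using ((hslope.comp hdouble).const_mul 2).sub hslope
  refine tendsto_of_tendsto_of_tendsto_of_le_of_le' hslope hupper ?_ ?_ <;>
    filter_upwards [self_mem_nhdsWithin] with x (hx : a < x)
  · exact hg.slope_le_deriv self_mem_Ici hx.le hx (hdiff.differentiableAt (Ioi_mem_nhds hx))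
  · have hslope_eq : slope g x (2 * x - a) = 2 * slope g a (2 * x - a) - slope g a x := by
      have : x - a ≠ 0 := sub_ne_zero.2 hx.ne'
      simp only [slope_def_field]
      rw [show 2 * x - a - x = x - a by ring, show 2 * x - a - a = 2 * (x - a) by ring]
      field_simp
      ring
    rw [← hslope_eq]
    exact hg.deriv_le_slope hx.le (by simp only [mem_Ici]; linarith) (by linarith)
      (hdiff.differentiableAt (Ioi_mem_nhds hx))

end Real

theorem statement_6_general (f : ℝ → ℝ)
    (hf : ContDiffOn ℝ 2 f (Ioi 0))
    (hf'' : ∀ s > (0:ℝ), 0 < deriv (deriv f) s)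
    (hdiff0 : DifferentiableAt ℝ (fun F : M2E => f ‖F‖) 0) :
    (∀ F F' : M2E, F ≠ F' →
        fderiv ℝ (fun G : M2E => f ‖G‖) F (F' - F) < f ‖F'‖ - f ‖F‖) ∧
    (∀ F F' : M2E, F ≠ F' →
        0 < fderiv ℝ (fun G : M2E => f ‖G‖) F' (F' - F)
              - fderiv ℝ (fun G : M2E => f ‖G‖) F (F' - F)) ∧
    Continuous (fun F : M2E => fderiv ℝ (fun G : M2E => f ‖G‖) F) := by
  have h0 : HasDerivWithinAt f 0 (Ici 0) 0 :=
    hasDerivWithinAt_Ici_zero_of_differentiableAt_comp_norm hdiff0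
  have hd : DifferentiableOn ℝ f (Ioi 0) := hf.differentiableOn two_ne_zero
  have hcont : ContinuousOn f (Ici 0) := fun x hx => (mem_Ici.1 hx).eq_or_lt.elim
    (fun h => h ▸ h0.continuousWithinAt)
    (fun h => (hd.differentiableAt (Ioi_mem_nhds h)).continuousAt.continuousWithinAt)
  have hconv : StrictConvexOn ℝ (Ici 0) f :=
    strictConvexOn_of_deriv2_pos (convex_Ici 0) hcont (by simpa using hf'')
  have hγ : StrictConvexOn ℝ univ (fun F : M2E => f ‖F‖) :=
    hconv.comp_norm (hconv.strictMonoOn_Ici_of_hasDerivWithinAt h0 le_rfl)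
  have hγd (F : M2E) : DifferentiableAt ℝ (fun G : M2E => f ‖G‖) F := by
    rcases eq_or_ne F 0 with rfl | hF
    · exact hdiff0
    · exact (hd.differentiableAt (Ioi_mem_nhds (norm_pos_iff.2 hF))).comp F
        (differentiableAt_id.norm ℝ hF)
  exact ⟨fun F F' hne => hγ.fderiv_lt_sub (hγd F) hne,
    fun F F' hne => hγ.fderiv_sub_fderiv_pos (hγd F) (hγd F') hne,
    continuous_fderiv_comp_norm (hf.of_le one_le_two) (hconv.convexOn.tendsto_deriv_nhdsGT hd h0)⟩

/-- Lemma `bach0` (i): if `f ∈ C²((0,∞))` with `f'' > 0`, `Dγ(0)` exists and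
`γ(F) = f(|F|) ≥ γ(0) = 0`, then `γ` is strictly convex, `Dγ` is strictly monotone, and `Dγ`
is continuous. -/
theorem statement_6 (f : ℝ → ℝ)
    (hf : ContDiffOn ℝ 2 f (Ioi 0))
    (hf'' : ∀ s > (0:ℝ), 0 < deriv (deriv f) s)
    (hdiff0 : DifferentiableAt ℝ (fun F : M2E => f ‖F‖) 0)
    (hγ0 : f 0 = 0) (hγpos : ∀ F : M2E, 0 ≤ f ‖F‖) :
    (∀ F F' : M2E, F ≠ F' →
        fderiv ℝ (fun G : M2E => f ‖G‖) F (F' - F) < f ‖F'‖ - f ‖F‖) ∧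
    (∀ F F' : M2E, F ≠ F' →
        0 < fderiv ℝ (fun G : M2E => f ‖G‖) F' (F' - F)
              - fderiv ℝ (fun G : M2E => f ‖G‖) F (F' - F)) ∧
    Continuous (fun F : M2E => fderiv ℝ (fun G : M2E => f ‖G‖) F) :=
  statement_6_general f hf hf'' hdiff0

end
end
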